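/- Flattening preserves support over the simulation base: for any base B ⊇ N and formula φ among the subformulas of the fixed sequent, ⊩_B^L φ holds if and only if ⊩_B^L φ^♭ holds. -/

import Mathlib

abbrev Atom := ℕ
abbrev ASeq := Multiset Atom × Atom
abbrev Box := Multiset ASeq
abbrev ARule := Multiset Box × Box × Atom
abbrev Base := Set ARule

/-- An atom `d` is persistent in `B` if there is a rule `⟨∅, S, d⟩ ∈ B` with `S` nonempty. -/
def Persistent (B : Base) (d : Atom) : Prop :=
  ∃ S : Box, S ≠ 0 ∧ ((0 : Multiset Box), S, d) ∈ B

/-- Atomic derivability in a base. -/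
inductive Deriv (B : Base) : Multiset Atom → Atom → Prop
  | ref (p : Atom) : Deriv B {p} p
  | app (S : Box) (p : Atom)
      (bc : List (Box × Multiset Atom))
      (dc : List (Atom × Multiset Atom))
      (hrule : ((↑(bc.map Prod.fst) : Multiset Box), S, p) ∈ B)
      (hpers : ∀ x ∈ dc, Persistent B x.1)
      (hbox : ∀ x ∈ bc, ∀ s ∈ x.1, Deriv B (x.2 + s.1) s.2)
      (hd : ∀ x ∈ dc, Deriv B x.2 x.1)
      (hS : ∀ s ∈ S, Deriv B ((↑(dc.map Prod.fst) : Multiset Atom) + s.1) s.2) :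
      Deriv B ((bc.map Prod.snd).sum + (dc.map Prod.snd).sum) p

/-- Formulas of intuitionistic linear logic. -/
inductive Fml : Type
  | atom : Atom → Fml
  | top : Fml
  | zero : Fml
  | one : Fml
  | limp : Fml → Fml → Fml
  | tens : Fml → Fml → Fml
  | wth : Fml → Fml → Fml
  | plus : Fml → Fml → Fml
  | bang : Fml → Fml
deriving DecidableEq

/-- The degree of a formula. -/
def deg : Fml → ℕ
  | .atom _ => 1
  | .top => 2
  | .zero => 2
  | .one => 2
  | .limp φ ψ => deg φ + deg ψ + 1
  | .tens φ ψ => deg φ + deg ψ + 1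
  | .wth φ ψ => deg φ + deg ψ + 1
  | .plus φ ψ => deg φ + deg ψ + 1
  | .bang φ => deg φ + 1

theorem one_le_deg (φ : Fml) : 1 ≤ deg φ := by
  cases φ <;> simp [deg] <;> omega

mutual
  /-- Support `⊩_B^L φ` (empty left-hand side). -/
  def Supp : Base → Multiset Atom → Fml → Prop
    | B, L, .atom p => Deriv B L p
    | _, _, .top => True
    | B, L, .zero => ∀ (K : Multiset Atom) (p : Atom), Supp B (L + K) (.atom p)
    | B, L, .one => ∀ C : Base, B ⊆ C → ∀ (K : Multiset Atom) (p : Atom),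
        Supp C K (.atom p) → Supp C (L + K) (.atom p)
    | B, L, .limp φ ψ => SuppInf1 B L φ ψ
    | B, L, .tens φ ψ => ∀ C : Base, B ⊆ C → ∀ (K : Multiset Atom) (p : Atom),
        SuppInf2 C K φ ψ (.atom p) → Supp C (L + K) (.atom p)
    | B, L, .wth φ ψ => Supp B L φ ∧ Supp B L ψ
    | B, L, .plus φ ψ => ∀ C : Base, B ⊆ C → ∀ (K : Multiset Atom) (p : Atom),
        SuppInf1 C K φ (.atom p) → SuppInf1 C K ψ (.atom p) → Supp C (L + K) (.atom p)
    | B, L, .bang φ => ∀ C : Base, B ⊆ C → ∀ (K : Multiset Atom) (p : Atom),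
        (∀ D : Base, C ⊆ D → Supp D 0 φ → Supp D K (.atom p)) → Supp C (L + K) (.atom p)
  termination_by B L φ => 2 * deg φ
  decreasing_by
    all_goals
      try simp only [deg]
      try have h1 := one_le_deg φ
      try have h2 := one_le_deg ψ
      try have h3 := one_le_deg χ
      try have h4 := one_le_deg α
      try have h5 := one_le_deg β
      omega

  /-- The (Inf) clause for a singleton context `{φ} ⊩_B^L χ`. -/
  def SuppInf1 : Base → Multiset Atom → Fml → Fml → Prop
    | B, L, .bang α, χ => ∀ C : Base, B ⊆ C → Supp C 0 α → Supp C L χ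
    | B, L, φ, χ => ∀ C : Base, B ⊆ C → ∀ K : Multiset Atom,
        Supp C K φ → Supp C (L + K) χ
  termination_by B L φ χ => 2 * (deg φ + deg χ) - 1
  decreasing_by
    all_goals
      try simp only [deg]
      try have h1 := one_le_deg φ
      try have h2 := one_le_deg ψ
      try have h3 := one_le_deg χ
      try have h4 := one_le_deg α
      try have h5 := one_le_deg β
      omega

  /-- The (Inf) clause for a two-element context `{φ, ψ} ⊩_B^L χ`. -/
  def SuppInf2 : Base → Multiset Atom → Fml → Fml → Fml → Prop
    | B, L, .bang α, .bang β, χ => ∀ C : Base, B ⊆ C →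
        Supp C 0 α → Supp C 0 β → Supp C L χ
    | B, L, .bang α, ψ, χ => ∀ C : Base, B ⊆ C → ∀ K : Multiset Atom,
        Supp C 0 α → Supp C K ψ → Supp C (L + K) χ
    | B, L, φ, .bang β, χ => ∀ C : Base, B ⊆ C → ∀ K : Multiset Atom,
        Supp C 0 β → Supp C K φ → Supp C (L + K) χ
    | B, L, φ, ψ, χ => ∀ C : Base, B ⊆ C → ∀ K₁ K₂ : Multiset Atom,
        Supp C K₁ φ → Supp C K₂ ψ → Supp C (L + K₁ + K₂) χ
  termination_by B L φ ψ χ => 2 * (deg φ + deg ψ + deg χ) - 1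
  decreasing_by
    all_goals
      try simp only [deg]
      try have h1 := one_le_deg φ
      try have h2 := one_le_deg ψ
      try have h3 := one_le_deg χ
      try have h4 := one_le_deg α
      try have h5 := one_le_deg β
      omega
end

/-- Is the formula a `!`-formula? -/
def isBang : Fml → Bool
  | .bang _ => true
  | _ => false

/-- Strip a top-level `!`. -/
def unbang : Fml → Fml
  | .bang φ => φ
  | φ => φ

/-- Support for a multiset of formulas: the `(⊎)` clause. -/
def SuppMS (B : Base) (L : Multiset Atom) (Γ : Multiset Fml) : Prop :=
  ∃ l : List (Fml × Multiset Atom), (↑(l.map Prod.fst) : Multiset Fml) = Γ ∧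
    (l.map Prod.snd).sum = L ∧ ∀ x ∈ l, Supp B x.2 x.1

/-- The official (Inf) clause: `Γ ⊩_B^L φ`, where `Γ = !Δ ⊎ Θ`. -/
def SuppSeq (B : Base) (L : Multiset Atom) (Γ : Multiset Fml) (φ : Fml) : Prop :=
  ∀ C : Base, B ⊆ C → ∀ K : Multiset Atom,
    SuppMS C 0 ((Γ.filter (fun ψ => isBang ψ = true)).map unbang) →
    SuppMS C K (Γ.filter (fun ψ => isBang ψ = false)) →
    Supp C (L + K) φ

/-- Validity of a sequent `(Γ : φ)`. -/
def Valid (Γ : Multiset Fml) (φ : Fml) : Prop :=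
  ∀ B : Base, SuppSeq B 0 Γ φ
/-- The natural deduction system N_ILL. -/
inductive NDeriv : Multiset Fml → Fml → Prop
  | ax (φ : Fml) : NDeriv {φ} φ
  | limpI {Γ : Multiset Fml} {φ ψ : Fml} :
      NDeriv (Γ + {φ}) ψ → NDeriv Γ (.limp φ ψ)
  | limpE {Γ Δ : Multiset Fml} {φ ψ : Fml} :
      NDeriv Γ (.limp φ ψ) → NDeriv Δ φ → NDeriv (Γ + Δ) ψ
  | tensI {Γ Δ : Multiset Fml} {φ ψ : Fml} :
      NDeriv Γ φ → NDeriv Δ ψ → NDeriv (Γ + Δ) (.tens φ ψ)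
  | tensE {Γ Δ : Multiset Fml} {φ ψ χ : Fml} :
      NDeriv Γ (.tens φ ψ) → NDeriv (Δ + {φ, ψ}) χ → NDeriv (Γ + Δ) χ
  | oneI : NDeriv 0 .one
  | oneE {Γ Δ : Multiset Fml} {φ : Fml} :
      NDeriv Γ .one → NDeriv Δ φ → NDeriv (Γ + Δ) φ
  | wthI {Γ : Multiset Fml} {φ ψ : Fml} :
      NDeriv Γ φ → NDeriv Γ ψ → NDeriv Γ (.wth φ ψ)
  | wthE1 {Γ : Multiset Fml} {φ ψ : Fml} : NDeriv Γ (.wth φ ψ) → NDeriv Γ φ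
  | wthE2 {Γ : Multiset Fml} {φ ψ : Fml} : NDeriv Γ (.wth φ ψ) → NDeriv Γ ψ
  | plusI1 {Γ : Multiset Fml} {φ ψ : Fml} : NDeriv Γ φ → NDeriv Γ (.plus φ ψ)
  | plusI2 {Γ : Multiset Fml} {φ ψ : Fml} : NDeriv Γ ψ → NDeriv Γ (.plus φ ψ)
  | plusE {Γ Δ : Multiset Fml} {φ ψ χ : Fml} :
      NDeriv Γ (.plus φ ψ) → NDeriv (Δ + {φ}) χ → NDeriv (Δ + {ψ}) χ →
      NDeriv (Γ + Δ) χ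
  | topI (l : List (Multiset Fml × Fml)) :
      (∀ x ∈ l, NDeriv x.1 x.2) → NDeriv (l.map Prod.fst).sum .top
  | zeroE {Δ : Multiset Fml} {χ : Fml} (l : List (Multiset Fml × Fml)) :
      (∀ x ∈ l, NDeriv x.1 x.2) → NDeriv Δ .zero →
      NDeriv ((l.map Prod.fst).sum + Δ) χ
  | prom {φ : Fml} (l : List (Multiset Fml × Fml)) :
      (∀ x ∈ l, NDeriv x.1 (.bang x.2)) →
      NDeriv (↑(l.map (fun x => Fml.bang x.2)) : Multiset Fml) φ →
      NDeriv (l.map Prod.fst).sum (.bang φ)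
  | der {Γ Δ : Multiset Fml} {φ ψ : Fml} :
      NDeriv Γ (.bang φ) → NDeriv (Δ + {φ}) ψ → NDeriv (Γ + Δ) ψ
  | wk {Γ Δ : Multiset Fml} {φ ψ : Fml} :
      NDeriv Γ (.bang φ) → NDeriv Δ ψ → NDeriv (Γ + Δ) ψ
  | ctr {Γ Δ : Multiset Fml} {φ ψ : Fml} :
      NDeriv Γ (.bang φ) → NDeriv (Δ + {.bang φ, .bang φ}) ψ → NDeriv (Γ + Δ) ψ
/-- The set of subformulas of a formula. -/
def subf : Fml → Set Fml
  | .atom p => {.atom p}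
  | .top => {.top}
  | .zero => {.zero}
  | .one => {.one}
  | .limp φ ψ => insert (.limp φ ψ) (subf φ ∪ subf ψ)
  | .tens φ ψ => insert (.tens φ ψ) (subf φ ∪ subf ψ)
  | .wth φ ψ => insert (.wth φ ψ) (subf φ ∪ subf ψ)
  | .plus φ ψ => insert (.plus φ ψ) (subf φ ∪ subf ψ)
  | .bang φ => insert (.bang φ) (subf φ)

/-- The set of subformulas of a sequent `(Γ : φ)`. -/
def subfSeq (Γ : Multiset Fml) (φ : Fml) : Set Fml :=
  subf φ ∪ {ψ | ∃ γ ∈ Γ, ψ ∈ subf γ}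

/-- The simulation base `N`, built from a flattening map `f` over the set `Ξ`. -/
def SimBase (Ξ : Set Fml) (f : Fml → Atom) : Base :=
  { r |
    -- ⊸I
    (∃ φ ∈ Ξ, ∃ ψ ∈ Ξ, r = ({({({f φ}, f ψ)} : Box)}, (0 : Box), f (.limp φ ψ))) ∨
    -- ⊸E
    (∃ φ ∈ Ξ, ∃ ψ ∈ Ξ, r = ({({((0 : Multiset Atom), f (.limp φ ψ))} : Box),
        ({((0 : Multiset Atom), f φ)} : Box)}, (0 : Box), f ψ)) ∨
    -- ⊗I
    (∃ φ ∈ Ξ, ∃ ψ ∈ Ξ, r = ({({((0 : Multiset Atom), f φ)} : Box),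
        ({((0 : Multiset Atom), f ψ)} : Box)}, (0 : Box), f (.tens φ ψ))) ∨
    -- ⊗E
    (∃ φ ∈ Ξ, ∃ ψ ∈ Ξ, ∃ p : Atom, r = ({({((0 : Multiset Atom), f (.tens φ ψ))} : Box),
        ({(({f φ, f ψ} : Multiset Atom), p)} : Box)}, (0 : Box), p)) ∨
    -- 1I
    (r = ((0 : Multiset Box), (0 : Box), f .one)) ∨
    -- 1E
    (∃ p : Atom, r = ({({((0 : Multiset Atom), f .one)} : Box),
        ({((0 : Multiset Atom), p)} : Box)}, (0 : Box), p)) ∨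
    -- &I
    (∃ φ ∈ Ξ, ∃ ψ ∈ Ξ, r = ({({((0 : Multiset Atom), f φ),
        ((0 : Multiset Atom), f ψ)} : Box)}, (0 : Box), f (.wth φ ψ))) ∨
    -- &E1, &E2
    (∃ φ ∈ Ξ, ∃ ψ ∈ Ξ, r = ({({((0 : Multiset Atom), f (.wth φ ψ))} : Box)}, (0 : Box), f φ)) ∨
    (∃ φ ∈ Ξ, ∃ ψ ∈ Ξ, r = ({({((0 : Multiset Atom), f (.wth φ ψ))} : Box)}, (0 : Box), f ψ)) ∨
    -- ⊕I1, ⊕I2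
    (∃ φ ∈ Ξ, ∃ ψ ∈ Ξ, r = ({({((0 : Multiset Atom), f φ)} : Box)}, (0 : Box), f (.plus φ ψ))) ∨
    (∃ φ ∈ Ξ, ∃ ψ ∈ Ξ, r = ({({((0 : Multiset Atom), f ψ)} : Box)}, (0 : Box), f (.plus φ ψ))) ∨
    -- ⊕E
    (∃ φ ∈ Ξ, ∃ ψ ∈ Ξ, ∃ p : Atom, r = ({({((0 : Multiset Atom), f (.plus φ ψ))} : Box),
        ({(({f φ} : Multiset Atom), p), (({f ψ} : Multiset Atom), p)} : Box)}, (0 : Box), p)) ∨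
    -- ⊤I (one copy for each list of atoms)
    (∃ qs : List Atom, r = ((↑(qs.map (fun q => ({((0 : Multiset Atom), q)} : Box))) : Multiset Box),
        (0 : Box), f .top)) ∨
    -- 0E
    (∃ qs : List Atom, ∃ p : Atom,
      r = ((↑(qs.map (fun q => ({((0 : Multiset Atom), q)} : Box))) : Multiset Box) +
        {({((0 : Multiset Atom), f .zero)} : Box)}, (0 : Box), p)) ∨
    -- Prom
    (∃ φ ∈ Ξ, r = ((0 : Multiset Box), ({((0 : Multiset Atom), f φ)} : Box), f (.bang φ))) ∨
    -- Der
    (∃ φ ∈ Ξ, ∃ ψ ∈ Ξ, r = ({({((0 : Multiset Atom), f (.bang φ))} : Box),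
        ({(({f φ} : Multiset Atom), f ψ)} : Box)}, (0 : Box), f ψ)) ∨
    -- Wk
    (∃ φ ∈ Ξ, ∃ p : Atom, r = ({({((0 : Multiset Atom), f (.bang φ))} : Box),
        ({((0 : Multiset Atom), p)} : Box)}, (0 : Box), p)) ∨
    -- Ctr
    (∃ φ ∈ Ξ, ∃ p : Atom, r = ({({((0 : Multiset Atom), f (.bang φ))} : Box),
        ({(({f (.bang φ), f (.bang φ)} : Multiset Atom), p)} : Box)}, (0 : Box), p)) }


section Helpers
set_option linter.unusedVariables false

lemma persistent_mono {B C : Base} (h : B ⊆ C) {d : Atom} : Persistent B d → Persistent C d :=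
  fun ⟨S, hS, hm⟩ => ⟨S, hS, h hm⟩

lemma deriv_mono {B C : Base} (h : B ⊆ C) {L : Multiset Atom} {p : Atom}
    (hd : Deriv B L p) : Deriv C L p := by
  induction hd with
  | ref p => exact .ref p
  | app S p bc dc hrule hpers hbox hd hS ih1 ih2 ih3 =>
    exact .app S p bc dc (h hrule) (fun x hx => persistent_mono h (hpers x hx)) ih1 ih2 ih3

lemma deriv_cast {B : Base} {L M : Multiset Atom} {p : Atom} (h : Deriv B L p) (e : L = M) :
    Deriv B M p := e ▸ h

/-- apply a rule with two ordinary boxes -/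
lemma deriv_app2 {B : Base} {b1 b2 : Box} {p : Atom} {L1 L2 : Multiset Atom}
    (hr : (({b1, b2} : Multiset Box), (0 : Box), p) ∈ B)
    (h1 : ∀ s ∈ b1, Deriv B (L1 + s.1) s.2)
    (h2 : ∀ s ∈ b2, Deriv B (L2 + s.1) s.2) :
    Deriv B (L1 + L2) p := by
  have := Deriv.app (B := B) (0 : Box) p [(b1, L1), (b2, L2)] []
    (by exact hr) (by simp) ?_ (by simp) (by simp)
  · simpa using this
  · intro x hx s hs
    simp only [List.mem_cons, List.mem_singleton, List.not_mem_nil, or_false] at hx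
    rcases hx with rfl | rfl
    · exact h1 s hs
    · exact h2 s hs

lemma deriv_app1 {B : Base} {b1 : Box} {p : Atom} {L1 : Multiset Atom}
    (hr : (({b1} : Multiset Box), (0 : Box), p) ∈ B)
    (h1 : ∀ s ∈ b1, Deriv B (L1 + s.1) s.2) :
    Deriv B L1 p := by
  have := Deriv.app (B := B) (0 : Box) p [(b1, L1)] []
    (by simpa using hr) (by simp) ?_ (by simp) (by simp)
  · simpa using this
  · intro x hx s hs
    simp only [List.mem_singleton] at hx
    subst hx; exact h1 s hs

lemma deriv_app0 {B : Base} {p : Atom}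
    (hr : ((0 : Multiset Box), (0 : Box), p) ∈ B) : Deriv B 0 p := by
  have := Deriv.app (B := B) (0 : Box) p [] [] (by simpa using hr)
    (by simp) (by simp) (by simp) (by simp)
  simpa using this

/-- apply a box rule (Prom style) -/
lemma deriv_box {B : Base} {S : Box} {p : Atom}
    (hr : ((0 : Multiset Box), S, p) ∈ B)
    (hS : ∀ s ∈ S, Deriv B s.1 s.2) : Deriv B 0 p := by
  have := Deriv.app (B := B) S p [] [] (by simpa using hr)
    (by simp) (by simp) (by simp) (by simpa using hS)
  simpa using this

/-- singleton box premise helper -/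
lemma box_single {B : Base} {M : Multiset Atom} {q : Atom} {L : Multiset Atom}
    (h : Deriv B (L + M) q) : ∀ s ∈ ({(M, q)} : Box), Deriv B (L + s.1) s.2 := by
  intro s hs
  rw [Multiset.mem_singleton] at hs
  subst hs; exact h

lemma box_pair {B : Base} {M1 M2 : Multiset Atom} {q1 q2 : Atom} {L : Multiset Atom}
    (h1 : Deriv B (L + M1) q1) (h2 : Deriv B (L + M2) q2) :
    ∀ s ∈ ({(M1, q1), (M2, q2)} : Box), Deriv B (L + s.1) s.2 := by
  intro s hs
  rcases Multiset.mem_cons.mp hs with rfl | hs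
  · exact h1
  · rw [Multiset.mem_singleton] at hs; subst hs; exact h2

end Helpers
section Mono
set_option linter.unusedVariables false

lemma supp_atom {B : Base} {L : Multiset Atom} {p : Atom} :
    Supp B L (.atom p) ↔ Deriv B L p := by simp only [Supp]

lemma supp_mono : ∀ (φ : Fml) {B C : Base}, B ⊆ C → ∀ {L : Multiset Atom},
    Supp B L φ → Supp C L φ := by
  intro φ
  induction φ with
  | atom p => intro B C hBC L h; rw [supp_atom] at *; exact deriv_mono hBC h
  | top => intro B C hBC L h; simp only [Supp]
  | zero =>
    intro B C hBC L h
    simp only [Supp, supp_atom] at *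
    exact fun K p => deriv_mono hBC (h K p)
  | one =>
    intro B C hBC L h
    simp only [Supp] at *
    exact fun C' h' => h C' (hBC.trans h')
  | limp α β ih1 ih2 =>
    intro B C hBC L h
    simp only [Supp] at *
    cases α <;> simp only [SuppInf1] at * <;> exact fun C' h' => h C' (hBC.trans h')
  | tens α β ih1 ih2 =>
    intro B C hBC L h
    simp only [Supp] at *
    exact fun C' h' => h C' (hBC.trans h')
  | wth α β ih1 ih2 =>
    intro B C hBC L h
    simp only [Supp] at *
    exact ⟨ih1 hBC h.1, ih2 hBC h.2⟩
  | plus α β ih1 ih2 =>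
    intro B C hBC L h
    simp only [Supp] at *
    exact fun C' h' => h C' (hBC.trans h')
  | bang α ih =>
    intro B C hBC L h
    simp only [Supp] at *
    exact fun C' h' => h C' (hBC.trans h')

lemma supp_bang_of_supp {B : Base} {α : Fml} (h : Supp B 0 α) : Supp B 0 (.bang α) := by
  simp only [Supp, supp_atom]
  intro C hC K p hKp
  have := hKp C (fun _ h => h) (supp_mono α hC h)
  simpa using this

end Mono
section Rules
set_option linter.unusedVariables false
variable {Ξ : Set Fml} {f : Fml → Atom} {φ ψ : Fml} {p : Atom}

lemma mem_limpI (hφ : φ ∈ Ξ) (hψ : ψ ∈ Ξ) :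
    (({({({f φ}, f ψ)} : Box)} : Multiset Box), (0 : Box), f (.limp φ ψ)) ∈ SimBase Ξ f :=
  Or.inl ⟨φ, hφ, ψ, hψ, rfl⟩

lemma mem_limpE (hφ : φ ∈ Ξ) (hψ : ψ ∈ Ξ) :
    (({({((0 : Multiset Atom), f (.limp φ ψ))} : Box), ({((0 : Multiset Atom), f φ)} : Box)} :
      Multiset Box), (0 : Box), f ψ) ∈ SimBase Ξ f :=
  Or.inr <| Or.inl ⟨φ, hφ, ψ, hψ, rfl⟩

lemma mem_tensI (hφ : φ ∈ Ξ) (hψ : ψ ∈ Ξ) :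
    (({({((0 : Multiset Atom), f φ)} : Box), ({((0 : Multiset Atom), f ψ)} : Box)} :
      Multiset Box), (0 : Box), f (.tens φ ψ)) ∈ SimBase Ξ f :=
  Or.inr <| Or.inr <| Or.inl ⟨φ, hφ, ψ, hψ, rfl⟩

lemma mem_tensE (hφ : φ ∈ Ξ) (hψ : ψ ∈ Ξ) (p : Atom) :
    (({({((0 : Multiset Atom), f (.tens φ ψ))} : Box),
      ({(({f φ, f ψ} : Multiset Atom), p)} : Box)} : Multiset Box), (0 : Box), p) ∈ SimBase Ξ f :=
  Or.inr <| Or.inr <| Or.inr <| Or.inl ⟨φ, hφ, ψ, hψ, p, rfl⟩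

lemma mem_oneI : (((0 : Multiset Box), (0 : Box), f .one)) ∈ SimBase Ξ f :=
  Or.inr <| Or.inr <| Or.inr <| Or.inr <| Or.inl rfl

lemma mem_oneE (p : Atom) :
    (({({((0 : Multiset Atom), f .one)} : Box), ({((0 : Multiset Atom), p)} : Box)} :
      Multiset Box), (0 : Box), p) ∈ SimBase Ξ f :=
  Or.inr <| Or.inr <| Or.inr <| Or.inr <| Or.inr <| Or.inl ⟨p, rfl⟩

lemma mem_wthI (hφ : φ ∈ Ξ) (hψ : ψ ∈ Ξ) :
    (({({((0 : Multiset Atom), f φ), ((0 : Multiset Atom), f ψ)} : Box)} : Multiset Box),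
      (0 : Box), f (.wth φ ψ)) ∈ SimBase Ξ f :=
  Or.inr <| Or.inr <| Or.inr <| Or.inr <| Or.inr <| Or.inr <| Or.inl ⟨φ, hφ, ψ, hψ, rfl⟩

lemma mem_wthE1 (hφ : φ ∈ Ξ) (hψ : ψ ∈ Ξ) :
    (({({((0 : Multiset Atom), f (.wth φ ψ))} : Box)} : Multiset Box), (0 : Box), f φ) ∈
      SimBase Ξ f :=
  Or.inr <| Or.inr <| Or.inr <| Or.inr <| Or.inr <| Or.inr <| Or.inr <| Or.inl ⟨φ, hφ, ψ, hψ, rfl⟩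

lemma mem_wthE2 (hφ : φ ∈ Ξ) (hψ : ψ ∈ Ξ) :
    (({({((0 : Multiset Atom), f (.wth φ ψ))} : Box)} : Multiset Box), (0 : Box), f ψ) ∈
      SimBase Ξ f :=
  Or.inr <| Or.inr <| Or.inr <| Or.inr <| Or.inr <| Or.inr <| Or.inr <| Or.inr <|
    Or.inl ⟨φ, hφ, ψ, hψ, rfl⟩

lemma mem_plusI1 (hφ : φ ∈ Ξ) (hψ : ψ ∈ Ξ) :
    (({({((0 : Multiset Atom), f φ)} : Box)} : Multiset Box), (0 : Box), f (.plus φ ψ)) ∈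
      SimBase Ξ f :=
  Or.inr <| Or.inr <| Or.inr <| Or.inr <| Or.inr <| Or.inr <| Or.inr <| Or.inr <| Or.inr <|
    Or.inl ⟨φ, hφ, ψ, hψ, rfl⟩

lemma mem_plusI2 (hφ : φ ∈ Ξ) (hψ : ψ ∈ Ξ) :
    (({({((0 : Multiset Atom), f ψ)} : Box)} : Multiset Box), (0 : Box), f (.plus φ ψ)) ∈
      SimBase Ξ f :=
  Or.inr <| Or.inr <| Or.inr <| Or.inr <| Or.inr <| Or.inr <| Or.inr <| Or.inr <| Or.inr <|
    Or.inr <| Or.inl ⟨φ, hφ, ψ, hψ, rfl⟩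

lemma mem_plusE (hφ : φ ∈ Ξ) (hψ : ψ ∈ Ξ) (p : Atom) :
    (({({((0 : Multiset Atom), f (.plus φ ψ))} : Box),
      ({(({f φ} : Multiset Atom), p), (({f ψ} : Multiset Atom), p)} : Box)} : Multiset Box),
      (0 : Box), p) ∈ SimBase Ξ f :=
  Or.inr <| Or.inr <| Or.inr <| Or.inr <| Or.inr <| Or.inr <| Or.inr <| Or.inr <| Or.inr <|
    Or.inr <| Or.inr <| Or.inl ⟨φ, hφ, ψ, hψ, p, rfl⟩

lemma mem_topI (qs : List Atom) :
    ((↑(qs.map (fun q => ({((0 : Multiset Atom), q)} : Box))) : Multiset Box),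
      (0 : Box), f .top) ∈ SimBase Ξ f :=
  Or.inr <| Or.inr <| Or.inr <| Or.inr <| Or.inr <| Or.inr <| Or.inr <| Or.inr <| Or.inr <|
    Or.inr <| Or.inr <| Or.inr <| Or.inl ⟨qs, rfl⟩

lemma mem_zeroE (qs : List Atom) (p : Atom) :
    ((↑(qs.map (fun q => ({((0 : Multiset Atom), q)} : Box))) : Multiset Box) +
      {({((0 : Multiset Atom), f .zero)} : Box)}, (0 : Box), p) ∈ SimBase Ξ f :=
  Or.inr <| Or.inr <| Or.inr <| Or.inr <| Or.inr <| Or.inr <| Or.inr <| Or.inr <| Or.inr <|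
    Or.inr <| Or.inr <| Or.inr <| Or.inr <| Or.inl ⟨qs, p, rfl⟩

lemma mem_prom (hφ : φ ∈ Ξ) :
    ((0 : Multiset Box), ({((0 : Multiset Atom), f φ)} : Box), f (.bang φ)) ∈ SimBase Ξ f :=
  Or.inr <| Or.inr <| Or.inr <| Or.inr <| Or.inr <| Or.inr <| Or.inr <| Or.inr <| Or.inr <|
    Or.inr <| Or.inr <| Or.inr <| Or.inr <| Or.inr <| Or.inl ⟨φ, hφ, rfl⟩

lemma mem_der (hφ : φ ∈ Ξ) (hψ : ψ ∈ Ξ) :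
    (({({((0 : Multiset Atom), f (.bang φ))} : Box), ({(({f φ} : Multiset Atom), f ψ)} : Box)} :
      Multiset Box), (0 : Box), f ψ) ∈ SimBase Ξ f :=
  Or.inr <| Or.inr <| Or.inr <| Or.inr <| Or.inr <| Or.inr <| Or.inr <| Or.inr <| Or.inr <|
    Or.inr <| Or.inr <| Or.inr <| Or.inr <| Or.inr <| Or.inr <| Or.inl ⟨φ, hφ, ψ, hψ, rfl⟩

lemma mem_wk (hφ : φ ∈ Ξ) (p : Atom) :
    (({({((0 : Multiset Atom), f (.bang φ))} : Box), ({((0 : Multiset Atom), p)} : Box)} :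
      Multiset Box), (0 : Box), p) ∈ SimBase Ξ f :=
  Or.inr <| Or.inr <| Or.inr <| Or.inr <| Or.inr <| Or.inr <| Or.inr <| Or.inr <| Or.inr <|
    Or.inr <| Or.inr <| Or.inr <| Or.inr <| Or.inr <| Or.inr <| Or.inr <| Or.inl ⟨φ, hφ, p, rfl⟩

lemma mem_ctr (hφ : φ ∈ Ξ) (p : Atom) :
    (({({((0 : Multiset Atom), f (.bang φ))} : Box),
      ({(({f (.bang φ), f (.bang φ)} : Multiset Atom), p)} : Box)} : Multiset Box),
      (0 : Box), p) ∈ SimBase Ξ f :=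
  Or.inr <| Or.inr <| Or.inr <| Or.inr <| Or.inr <| Or.inr <| Or.inr <| Or.inr <| Or.inr <|
    Or.inr <| Or.inr <| Or.inr <| Or.inr <| Or.inr <| Or.inr <| Or.inr <| Or.inr <| ⟨φ, hφ, p, rfl⟩

end Rules
section Derived
set_option linter.unusedVariables false
variable {Ξ : Set Fml} {f : Fml → Atom} {φ ψ : Fml} {p : Atom} {C : Base}
  {L M K : Multiset Atom}

lemma prom_bang (hC : SimBase Ξ f ⊆ C) (hφ : φ ∈ Ξ) (h : Deriv C 0 (f φ)) :
    Deriv C 0 (f (.bang φ)) :=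
  deriv_box (hC (mem_prom hφ)) (by
    intro s hs
    rw [Multiset.mem_singleton] at hs
    subst hs
    exact h)

lemma wk_d (hC : SimBase Ξ f ⊆ C) (hφ : φ ∈ Ξ) (h : Deriv C M p) :
    Deriv C (M + {f (.bang φ)}) p := by
  have := deriv_app2 (hC (mem_wk hφ p)) (L1 := {f (.bang φ)}) (L2 := M)
    (box_single (by simpa using Deriv.ref (f (.bang φ)))) (box_single (by simpa using h))
  exact deriv_cast this (add_comm _ _)

lemma ctr_d (hC : SimBase Ξ f ⊆ C) (hφ : φ ∈ Ξ)
    (h : Deriv C (M + {f (.bang φ), f (.bang φ)}) p) :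
    Deriv C (M + {f (.bang φ)}) p := by
  have := deriv_app2 (hC (mem_ctr hφ p)) (L1 := {f (.bang φ)}) (L2 := M)
    (box_single (by simpa using Deriv.ref (f (.bang φ)))) (box_single h)
  exact deriv_cast this (add_comm _ _)

lemma ctr_L (hC : SimBase Ξ f ⊆ C) (hφ : φ ∈ Ξ) (hL : Deriv C L (f (.bang φ)))
    (h : Deriv C (M + {f (.bang φ), f (.bang φ)}) p) :
    Deriv C (L + M) p :=
  deriv_app2 (hC (mem_ctr hφ p)) (L1 := L) (L2 := M)
    (box_single (by simpa using hL)) (box_single h)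

lemma wk_L (hC : SimBase Ξ f ⊆ C) (hφ : φ ∈ Ξ) (hL : Deriv C L (f (.bang φ)))
    (h : Deriv C M p) : Deriv C (L + M) p :=
  deriv_app2 (hC (mem_wk hφ p)) (L1 := L) (L2 := M)
    (box_single (by simpa using hL)) (box_single (by simpa using h))

lemma ctr_many (hC : SimBase Ξ f ⊆ C) (hφ : φ ∈ Ξ) :
    ∀ (n : ℕ), Deriv C (M + n • ({f (.bang φ)} : Multiset Atom) + {f (.bang φ)}) p →
    Deriv C (M + {f (.bang φ)}) p := by
  intro n
  induction n generalizing M with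
  | zero => simpa using id
  | succ n ih =>
    intro h
    apply ih
    have : M + (n + 1) • ({f (.bang φ)} : Multiset Atom) + {f (.bang φ)} =
        (M + n • ({f (.bang φ)} : Multiset Atom)) + {f (.bang φ), f (.bang φ)} := by
      have e : ({f (.bang φ), f (.bang φ)} : Multiset Atom) =
        ({f (.bang φ)} : Multiset Atom) + {f (.bang φ)} := rfl
      rw [e, succ_nsmul]
      abel
    rw [this] at h
    exact ctr_d hC hφ h

/-- Weakened derivation of `f φ` from `{f (.bang φ)}` plus persistent contexts. -/
lemma der_wk (hC : SimBase Ξ f ⊆ C) (hφ : φ ∈ Ξ)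
    (l : List (Atom × Multiset Atom))
    (hpers : ∀ x ∈ l, Persistent C x.1) (hd : ∀ x ∈ l, Deriv C x.2 x.1) :
    Deriv C ((l.map Prod.snd).sum + {f (.bang φ)}) (f φ) := by
  have := Deriv.app (B := C) (0 : Box) (f φ)
    [(({((0 : Multiset Atom), f (.bang φ))} : Box), ({f (.bang φ)} : Multiset Atom)),
     (({(({f φ} : Multiset Atom), f φ)} : Box), (0 : Multiset Atom))] l
    (by exact hC (mem_der hφ hφ)) hpers ?_ hd (by simp)
  · refine deriv_cast this ?_
    simp
    rw [← Multiset.singleton_add, add_comm]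
  · intro x hx s hs
    simp only [List.mem_cons, List.mem_singleton, List.not_mem_nil, or_false] at hx
    rcases hx with rfl | rfl
    · simp only at hs ⊢
      rw [Multiset.mem_singleton] at hs
      subst hs
      simpa using Deriv.ref (f (.bang φ))
    · simp only at hs ⊢
      rw [Multiset.mem_singleton] at hs
      subst hs
      simpa using Deriv.ref (f φ)

end Derived
section Transfer
set_option linter.unusedVariables false
variable {Ξ : Set Fml} {f : Fml → Atom} {φ : Fml} {C : Base}

lemma sum_map_snd_add {α : Type} (l : List (α × Multiset Atom)) (e : Multiset Atom) :
    ((l.map (fun x => (x.1, x.2 + e))).map Prod.snd).sum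
      = (l.map Prod.snd).sum + l.length • e := by
  induction l with
  | nil => simp
  | cons x l ih =>
    simp only [List.map_cons, List.sum_cons, ih, List.length_cons, succ_nsmul]
    abel

lemma persistent_of_insert {a : ARule} (ha : a.2.1 = 0) {x : Atom}
    (h : Persistent (insert a C) x) : Persistent C x := by
  obtain ⟨S, hS, hm⟩ := h
  rcases Set.mem_insert_iff.mp hm with heq | hm'
  · exfalso
    apply hS
    have := congrArg (fun r => r.2.1) heq
    simpa [ha] using this
  · exact ⟨S, hS, hm'⟩

lemma transfer (hC : SimBase Ξ f ⊆ C) (hφ : φ ∈ Ξ)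
    {M : Multiset Atom} {p : Atom}
    (h : Deriv (insert ((0 : Multiset Box), (0 : Box), f φ) C) M p) :
    Deriv C (M + {f (.bang φ)}) p := by
  set d := f (.bang φ) with hd_def
  set q := f φ with hq_def
  set a : ARule := ((0 : Multiset Box), (0 : Box), q) with ha_def
  have hpersd : Persistent C d := ⟨{((0 : Multiset Atom), q)}, by simp, hC (mem_prom hφ)⟩
  induction h with
  | ref r => exact wk_d hC hφ (Deriv.ref r)
  | app S r bc dc hrule hpers hbox hder hS ihbox ihd ihS =>
    rcases Set.mem_insert_iff.mp hrule with heq | hmem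
    · -- the new axiom rule
      simp only [ha_def, Prod.mk.injEq] at heq
      obtain ⟨h1, h2, h3⟩ := heq
      have hbc : bc = [] := by simpa using h1
      subst hbc h3
      have := der_wk hC hφ (dc.map (fun x => (x.1, x.2 + {d})))
        (by
          intro x hx
          obtain ⟨y, hy, rfl⟩ := List.mem_map.mp hx
          exact persistent_of_insert rfl (hpers y hy))
        (by
          intro x hx
          obtain ⟨y, hy, rfl⟩ := List.mem_map.mp hx
          exact ihd y hy)
      rw [sum_map_snd_add] at this
      have := ctr_many hC hφ _ this
      refine deriv_cast this ?_
      simp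
      rfl
    · -- a rule of C
      have happ := Deriv.app (B := C) S r
        (bc.map (fun x => (x.1, x.2 + {d})))
        ((d, ({d} : Multiset Atom)) :: dc.map (fun x => (x.1, x.2 + {d})))
        (by
          have : (bc.map (fun x => (x.1, x.2 + {d}))).map Prod.fst = bc.map Prod.fst := by
            simp [List.map_map, Function.comp]
          rw [this]
          exact hmem)
        (by
          intro x hx
          rcases List.mem_cons.mp hx with rfl | hx'
          · exact hpersd
          · obtain ⟨y, hy, rfl⟩ := List.mem_map.mp hx'
            exact persistent_of_insert rfl (hpers y hy))
        (by
          intro x hx s hs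
          obtain ⟨y, hy, rfl⟩ := List.mem_map.mp hx
          have := ihbox y hy s hs
          refine deriv_cast this ?_
          simp only
          abel)
        (by
          intro x hx
          rcases List.mem_cons.mp hx with rfl | hx'
          · exact Deriv.ref d
          · obtain ⟨y, hy, rfl⟩ := List.mem_map.mp hx'
            exact ihd y hy)
        (by
          intro s hs
          have := ihS s hs
          refine deriv_cast this ?_
          simp only [List.map_cons, List.map_map, Multiset.cons_coe]
          have e1 : (List.map Prod.fst (dc.map (fun x => (x.1, x.2 + {d})))) =
              dc.map Prod.fst := by simp [List.map_map, Function.comp]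
          rw [show (Prod.fst ∘ fun x : Atom × Multiset Atom => (x.1, x.2 + {d}))
              = Prod.fst by rfl]
          rw [← Multiset.cons_coe, ← Multiset.singleton_add]
          abel)
      rw [sum_map_snd_add] at happ
      simp only [List.map_cons, List.sum_cons, sum_map_snd_add, List.length_map] at happ
      have : ((bc.map Prod.snd).sum + bc.length • ({d} : Multiset Atom) +
          ({d} + ((dc.map Prod.snd).sum + dc.length • ({d} : Multiset Atom)))) =
          ((bc.map Prod.snd).sum + (dc.map Prod.snd).sum) +
            (bc.length + dc.length) • ({d} : Multiset Atom) + {d} := by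
        rw [add_nsmul]
        abel
      rw [this] at happ
      exact ctr_many hC hφ _ happ
section PPdef
set_option linter.unusedVariables false

/-- The key property: support coincides with derivability of the flattened atom. -/
def PP (Ξ : Set Fml) (f : Fml → Atom) (φ : Fml) : Prop :=
  ∀ B : Base, SimBase Ξ f ⊆ B → ∀ L : Multiset Atom, Supp B L φ ↔ Deriv B L (f φ)

variable {Ξ : Set Fml} {f : Fml → Atom}

lemma pp_atom (hatom : ∀ q : Atom, f (.atom q) = q) (p : Atom) : PP Ξ f (.atom p) := by
  intro B hB L
  rw [hatom, supp_atom]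

lemma inf1_elim {φ χ : Fml} (hPφ : PP Ξ f φ) (hPχ : PP Ξ f χ) {B : Base}
    (hB : SimBase Ξ f ⊆ B) {K : Multiset Atom} (h : SuppInf1 B K φ χ) :
    Deriv B (K + {f φ}) (f χ) := by
  cases φ
  case bang α =>
    have hs := (hPφ B hB {f (.bang α)}).mpr (Deriv.ref (f (.bang α)))
    simp only [Supp, supp_atom] at hs
    simp only [SuppInf1] at h
    have := hs B (fun _ h => h) K (f χ)
      (fun D hD hsD => (hPχ D (hB.trans hD) K).mp (h D hD hsD))
    exact deriv_cast this (add_comm _ _)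
  all_goals (
    simp only [SuppInf1] at h
    exact (hPχ B hB _).mp (h B (fun _ h => h) _ ((hPφ B hB _).mpr (Deriv.ref _))))

lemma inf1_intro {φ χ : Fml} (hPφ : PP Ξ f φ) {B : Base}
    (hB : SimBase Ξ f ⊆ B) {L : Multiset Atom}
    (hflat : ∀ C : Base, B ⊆ C → ∀ K : Multiset Atom, Deriv C K (f φ) → Supp C (L + K) χ) :
    SuppInf1 B L φ χ := by
  cases φ
  case bang α =>
    simp only [SuppInf1]
    intro C hC hα
    have := hflat C hC 0 ((hPφ C (hB.trans hC) 0).mp (supp_bang_of_supp hα))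
    simpa using this
  all_goals (
    simp only [SuppInf1]
    intro C hC K hs
    exact hflat C hC K ((hPφ C (hB.trans hC) K).mp hs))

lemma inf2_elim {φ ψ χ : Fml} (hPφ : PP Ξ f φ) (hPψ : PP Ξ f ψ) (hPχ : PP Ξ f χ) {B : Base}
    (hB : SimBase Ξ f ⊆ B) {K : Multiset Atom} (h : SuppInf2 B K φ ψ χ) :
    Deriv B (K + {f φ} + {f ψ}) (f χ) := by
  cases φ <;> cases ψ <;>
    first
    | -- both bang
      (rename_i α β
       simp only [SuppInf2] at h
       have hsφ := (hPφ B hB {f (.bang α)}).mpr (Deriv.ref (f (.bang α)))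
       simp only [Supp, supp_atom] at hsφ
       refine deriv_cast (hsφ B (fun _ h => h) (K + {f (Fml.bang β)}) (f χ)
         (fun D hD hα => ?_)) (by abel)
       have hsψ := (hPψ D (hB.trans hD) {f (.bang β)}).mpr (Deriv.ref (f (.bang β)))
       simp only [Supp, supp_atom] at hsψ
       refine deriv_cast (hsψ D (fun _ h => h) K (f χ)
         (fun E hE hβ => (hPχ E ((hB.trans hD).trans hE) K).mp
           (h E (hD.trans hE) (supp_mono _ hE hα) hβ))) (add_comm _ _))
    | -- φ bang, ψ not
      (simp only [SuppInf2] at h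
       have hsφ := (hPφ B hB _).mpr (Deriv.ref _)
       simp only [Supp, supp_atom] at hsφ
       refine deriv_cast (hsφ B (fun _ h => h) _ (f χ)
         (fun D hD hα => (hPχ D (hB.trans hD) _).mp
           (h D hD _ hα ((hPψ D (hB.trans hD) _).mpr (Deriv.ref _))))) (by abel))
    | -- ψ bang, φ not
      (simp only [SuppInf2] at h
       have hsψ := (hPψ B hB _).mpr (Deriv.ref _)
       simp only [Supp, supp_atom] at hsψ
       refine deriv_cast (hsψ B (fun _ h => h) _ (f χ)
         (fun D hD hβ => (hPχ D (hB.trans hD) _).mp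
           (h D hD _ hβ ((hPφ D (hB.trans hD) _).mpr (Deriv.ref _))))) (by abel))
    | -- neither bang
      (simp only [SuppInf2] at h
       exact (hPχ B hB _).mp (h B (fun _ h => h) _ _
         ((hPφ B hB _).mpr (Deriv.ref _)) ((hPψ B hB _).mpr (Deriv.ref _))))

lemma inf2_intro {φ ψ χ : Fml} (hPφ : PP Ξ f φ) (hPψ : PP Ξ f ψ) {B : Base}
    (hB : SimBase Ξ f ⊆ B) {L : Multiset Atom}
    (hflat : ∀ C : Base, B ⊆ C → ∀ K1 K2 : Multiset Atom,
      Deriv C K1 (f φ) → Deriv C K2 (f ψ) → Supp C (L + K1 + K2) χ) :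
    SuppInf2 B L φ ψ χ := by
  cases φ <;> cases ψ <;>
    first
    | -- both bang
      (simp only [SuppInf2]
       intro C hC hα hβ
       have := hflat C hC 0 0
         ((hPφ C (hB.trans hC) 0).mp (supp_bang_of_supp hα))
         ((hPψ C (hB.trans hC) 0).mp (supp_bang_of_supp hβ))
       simpa using this)
    | -- φ bang, ψ not
      (simp only [SuppInf2]
       intro C hC K hα hψs
       have := hflat C hC 0 K
         ((hPφ C (hB.trans hC) 0).mp (supp_bang_of_supp hα))
         ((hPψ C (hB.trans hC) K).mp hψs)
       simpa using this)
    | -- ψ bang, φ not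
      (simp only [SuppInf2]
       intro C hC K hβ hφs
       have := hflat C hC K 0
         ((hPφ C (hB.trans hC) K).mp hφs)
         ((hPψ C (hB.trans hC) 0).mp (supp_bang_of_supp hβ))
       simpa using this)
    | -- neither bang
      (simp only [SuppInf2]
       intro C hC K1 K2 h1 h2
       exact hflat C hC K1 K2
         ((hPφ C (hB.trans hC) K1).mp h1) ((hPψ C (hB.trans hC) K2).mp h2))

end PPdef
section Subf
set_option linter.unusedVariables false

lemma subf_self : ∀ φ : Fml, φ ∈ subf φ := by
  intro φ
  cases φ <;> simp [subf]

lemma subf_subset : ∀ φ ψ : Fml, ψ ∈ subf φ → subf ψ ⊆ subf φ := by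
  intro φ
  induction φ with
  | atom p =>
    intro ψ h
    simp only [subf, Set.mem_singleton_iff] at h
    subst h; exact fun _ h => h
  | top =>
    intro ψ h
    simp only [subf, Set.mem_singleton_iff] at h
    subst h; exact fun _ h => h
  | zero =>
    intro ψ h
    simp only [subf, Set.mem_singleton_iff] at h
    subst h; exact fun _ h => h
  | one =>
    intro ψ h
    simp only [subf, Set.mem_singleton_iff] at h
    subst h; exact fun _ h => h
  | limp α β ih1 ih2 =>
    intro ψ h
    rcases Set.mem_insert_iff.mp h with rfl | h
    · exact fun _ h => h
    · rcases h with h | h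
      · exact (ih1 ψ h).trans fun x hx => Set.mem_insert_iff.mpr (Or.inr (Or.inl hx))
      · exact (ih2 ψ h).trans fun x hx => Set.mem_insert_iff.mpr (Or.inr (Or.inr hx))
  | tens α β ih1 ih2 =>
    intro ψ h
    rcases Set.mem_insert_iff.mp h with rfl | h
    · exact fun _ h => h
    · rcases h with h | h
      · exact (ih1 ψ h).trans fun x hx => Set.mem_insert_iff.mpr (Or.inr (Or.inl hx))
      · exact (ih2 ψ h).trans fun x hx => Set.mem_insert_iff.mpr (Or.inr (Or.inr hx))
  | wth α β ih1 ih2 =>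
    intro ψ h
    rcases Set.mem_insert_iff.mp h with rfl | h
    · exact fun _ h => h
    · rcases h with h | h
      · exact (ih1 ψ h).trans fun x hx => Set.mem_insert_iff.mpr (Or.inr (Or.inl hx))
      · exact (ih2 ψ h).trans fun x hx => Set.mem_insert_iff.mpr (Or.inr (Or.inr hx))
  | plus α β ih1 ih2 =>
    intro ψ h
    rcases Set.mem_insert_iff.mp h with rfl | h
    · exact fun _ h => h
    · rcases h with h | h
      · exact (ih1 ψ h).trans fun x hx => Set.mem_insert_iff.mpr (Or.inr (Or.inl hx))
      · exact (ih2 ψ h).trans fun x hx => Set.mem_insert_iff.mpr (Or.inr (Or.inr hx))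
  | bang α ih =>
    intro ψ h
    rcases Set.mem_insert_iff.mp h with rfl | h
    · exact fun _ h => h
    · exact (ih ψ h).trans fun x hx => Set.mem_insert_iff.mpr (Or.inr hx)

lemma subfSeq_closed (Γ0 : Multiset Fml) (φ0 : Fml) :
    ∀ φ ∈ subfSeq Γ0 φ0, ∀ ψ ∈ subf φ, ψ ∈ subfSeq Γ0 φ0 := by
  intro φ hφ ψ hψ
  rcases hφ with h | ⟨γ, hγ, hs⟩
  · exact Or.inl (subf_subset _ _ h hψ)
  · exact Or.inr ⟨γ, hγ, subf_subset _ _ hs hψ⟩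

lemma sum_singletons : ∀ l : List Atom, (l.map (fun q => ({q} : Multiset Atom))).sum = ↑l := by
  intro l
  induction l with
  | nil => simp
  | cons x l ih =>
    simp only [List.map_cons, List.sum_cons, ih, ← Multiset.cons_coe,
      ← Multiset.singleton_add]

end Subf
section TopZero
set_option linter.unusedVariables false
variable {Ξ : Set Fml} {f : Fml → Atom} {B : Base}

lemma top_deriv (hB : SimBase Ξ f ⊆ B) (L : Multiset Atom) : Deriv B L (f .top) := by
  have := Deriv.app (B := B) (0 : Box) (f .top)
    (L.toList.map (fun q => (({((0 : Multiset Atom), q)} : Box), ({q} : Multiset Atom)))) []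
    (by
      have : ((L.toList.map (fun q => (({((0 : Multiset Atom), q)} : Box),
          ({q} : Multiset Atom)))).map Prod.fst) =
          L.toList.map (fun q => ({((0 : Multiset Atom), q)} : Box)) := by
        simp [List.map_map, Function.comp]
      rw [this]
      exact hB (mem_topI L.toList))
    (by simp)
    (by
      intro x hx s hs
      obtain ⟨q, hq, rfl⟩ := List.mem_map.mp hx
      simp only at hs ⊢
      rw [Multiset.mem_singleton] at hs
      subst hs
      simpa using Deriv.ref q)
    (by simp) (by simp)
  refine deriv_cast this ?_
  simp only [List.map_map, List.map_nil, List.sum_nil, add_zero]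
  rw [show (Prod.snd ∘ fun q : Atom => (({((0 : Multiset Atom), q)} : Box),
    ({q} : Multiset Atom))) = (fun q : Atom => ({q} : Multiset Atom)) from rfl]
  rw [sum_singletons, Multiset.coe_toList]

lemma zero_deriv (hB : SimBase Ξ f ⊆ B) {L : Multiset Atom} (h : Deriv B L (f .zero))
    (K : Multiset Atom) (p : Atom) : Deriv B (L + K) p := by
  have := Deriv.app (B := B) (0 : Box) p
    ((K.toList.map (fun q => (({((0 : Multiset Atom), q)} : Box), ({q} : Multiset Atom)))) ++
      [(({((0 : Multiset Atom), f .zero)} : Box), L)]) []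
    (by
      have e : (((K.toList.map (fun q => (({((0 : Multiset Atom), q)} : Box),
          ({q} : Multiset Atom)))) ++
          [(({((0 : Multiset Atom), f .zero)} : Box), L)]).map Prod.fst) =
          (K.toList.map (fun q => ({((0 : Multiset Atom), q)} : Box))) ++
            [({((0 : Multiset Atom), f .zero)} : Box)] := by
        simp [List.map_map, Function.comp]
      rw [e]
      have := hB (mem_zeroE K.toList p)
      rw [← Multiset.coe_add, Multiset.coe_singleton]
      exact this)
    (by simp)
    (by
      intro x hx s hs
      rcases List.mem_append.mp hx with hx' | hx'
      · obtain ⟨q, hq, rfl⟩ := List.mem_map.mp hx'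
        simp only at hs ⊢
        rw [Multiset.mem_singleton] at hs
        subst hs
        simpa using Deriv.ref q
      · rw [List.mem_singleton] at hx'
        subst hx'
        simp only at hs ⊢
        rw [Multiset.mem_singleton] at hs
        subst hs
        simpa using h)
    (by simp) (by simp)
  refine deriv_cast this ?_
  simp only [List.map_append, List.map_map, List.map_nil, List.sum_nil, add_zero,
    List.sum_append, List.map_cons, List.sum_cons]
  rw [show (Prod.snd ∘ fun q : Atom => (({((0 : Multiset Atom), q)} : Box),
    ({q} : Multiset Atom))) = (fun q : Atom => ({q} : Multiset Atom)) from rfl]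
  rw [sum_singletons, Multiset.coe_toList]
  simp [add_comm]

end TopZero
section Main
set_option linter.unusedVariables false
set_option maxHeartbeats 1000000

theorem pp_main (Ξ : Set Fml) (f : Fml → Atom) (hatom : ∀ q : Atom, f (.atom q) = q)
    (hcl : ∀ φ ∈ Ξ, ∀ ψ ∈ subf φ, ψ ∈ Ξ) :
    ∀ (n : ℕ) (φ : Fml), deg φ ≤ n → φ ∈ Ξ → PP Ξ f φ := by
  intro n
  induction n with
  | zero =>
    intro φ h
    exact absurd h (by have := one_le_deg φ; omega)
  | succ n ih =>
    intro φ hdeg hφ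
    cases φ with
    | atom p => exact pp_atom hatom p
    | top =>
      intro B hB L
      constructor
      · intro _
        exact top_deriv hB L
      · intro _
        simp only [Supp]
    | zero =>
      intro B hB L
      simp only [Supp, supp_atom]
      constructor
      · intro h
        have := h 0 (f .zero)
        simpa using this
      · intro h K p
        exact zero_deriv hB h K p
    | one =>
      intro B hB L
      simp only [Supp, supp_atom]
      constructor
      · intro h
        have := h B (fun _ h => h) 0 (f .one) (deriv_app0 (hB mem_oneI))
        simpa using this
      · intro h C hC K p hK
        exact deriv_app2 ((hB.trans hC) (mem_oneE p))
          (box_single (deriv_cast (deriv_mono hC h) (add_zero L).symm))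
          (box_single (deriv_cast hK (add_zero K).symm))
    | limp α β =>
      have h1 := one_le_deg α
      have h2 := one_le_deg β
      simp only [deg] at hdeg
      have hα : α ∈ Ξ := hcl _ hφ α (by simp [subf, subf_self])
      have hβ : β ∈ Ξ := hcl _ hφ β (by simp [subf, subf_self])
      have hPα := ih α (by omega) hα
      have hPβ := ih β (by omega) hβ
      intro B hB L
      simp only [Supp]
      constructor
      · intro h
        exact deriv_app1 (hB (mem_limpI hα hβ)) (box_single (inf1_elim hPα hPβ hB h))
      · intro h
        refine inf1_intro hPα hB ?_
        intro C hC K hK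
        refine (hPβ C (hB.trans hC) _).mpr ?_
        exact deriv_app2 ((hB.trans hC) (mem_limpE hα hβ))
          (box_single (deriv_cast (deriv_mono hC h) (add_zero L).symm))
          (box_single (deriv_cast hK (add_zero K).symm))
    | tens α β =>
      have h1 := one_le_deg α
      have h2 := one_le_deg β
      simp only [deg] at hdeg
      have hα : α ∈ Ξ := hcl _ hφ α (by simp [subf, subf_self])
      have hβ : β ∈ Ξ := hcl _ hφ β (by simp [subf, subf_self])
      have hPα := ih α (by omega) hα
      have hPβ := ih β (by omega) hβ
      intro B hB L
      simp only [Supp, supp_atom]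
      constructor
      · intro h
        have := h B (fun _ h => h) 0 (f (.tens α β)) (inf2_intro hPα hPβ hB ?_)
        · simpa using this
        · intro C hC K1 K2 hk1 hk2
          refine supp_atom.mpr (deriv_cast (deriv_app2 ((hB.trans hC) (mem_tensI hα hβ))
            (box_single (deriv_cast hk1 (add_zero K1).symm))
            (box_single (deriv_cast hk2 (add_zero K2).symm))) ?_)
          simp
      · intro h C hC K p hs2
        have hd2 := inf2_elim hPα hPβ (pp_atom hatom p) (hB.trans hC) hs2
        rw [hatom] at hd2
        refine deriv_app2 ((hB.trans hC) (mem_tensE hα hβ p))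
          (box_single (deriv_cast (deriv_mono hC h) (add_zero L).symm))
          (box_single (deriv_cast hd2 ?_))
        simp [Multiset.insert_eq_cons, ← Multiset.singleton_add, add_assoc]
    | wth α β =>
      have h1 := one_le_deg α
      have h2 := one_le_deg β
      simp only [deg] at hdeg
      have hα : α ∈ Ξ := hcl _ hφ α (by simp [subf, subf_self])
      have hβ : β ∈ Ξ := hcl _ hφ β (by simp [subf, subf_self])
      have hPα := ih α (by omega) hα
      have hPβ := ih β (by omega) hβ
      intro B hB L
      simp only [Supp]
      constructor
      · intro ⟨ha, hb⟩
        exact deriv_app1 (hB (mem_wthI hα hβ))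
          (box_pair (deriv_cast ((hPα B hB L).mp ha) (add_zero L).symm)
            (deriv_cast ((hPβ B hB L).mp hb) (add_zero L).symm))
      · intro h
        constructor
        · refine (hPα B hB L).mpr ?_
          exact deriv_app1 (hB (mem_wthE1 hα hβ))
            (box_single (deriv_cast h (add_zero L).symm))
        · refine (hPβ B hB L).mpr ?_
          exact deriv_app1 (hB (mem_wthE2 hα hβ))
            (box_single (deriv_cast h (add_zero L).symm))
    | plus α β =>
      have h1 := one_le_deg α
      have h2 := one_le_deg β
      simp only [deg] at hdeg
      have hα : α ∈ Ξ := hcl _ hφ α (by simp [subf, subf_self])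
      have hβ : β ∈ Ξ := hcl _ hφ β (by simp [subf, subf_self])
      have hPα := ih α (by omega) hα
      have hPβ := ih β (by omega) hβ
      intro B hB L
      simp only [Supp, supp_atom]
      constructor
      · intro h
        have := h B (fun _ h => h) 0 (f (.plus α β)) (inf1_intro hPα hB ?_)
          (inf1_intro hPβ hB ?_)
        · simpa using this
        · intro C hC K hK
          refine supp_atom.mpr (deriv_cast (deriv_app1 ((hB.trans hC) (mem_plusI1 hα hβ))
            (box_single (deriv_cast hK (add_zero K).symm))) ?_)
          simp
        · intro C hC K hK
          refine supp_atom.mpr (deriv_cast (deriv_app1 ((hB.trans hC) (mem_plusI2 hα hβ))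
            (box_single (deriv_cast hK (add_zero K).symm))) ?_)
          simp
      · intro h C hC K p hs1 hs2
        have hd1 := inf1_elim hPα (pp_atom hatom p) (hB.trans hC) hs1
        have hd2 := inf1_elim hPβ (pp_atom hatom p) (hB.trans hC) hs2
        rw [hatom] at hd1 hd2
        exact deriv_app2 ((hB.trans hC) (mem_plusE hα hβ p))
          (box_single (deriv_cast (deriv_mono hC h) (add_zero L).symm))
          (box_pair hd1 hd2)
    | bang α =>
      have h1 := one_le_deg α
      simp only [deg] at hdeg
      have hα : α ∈ Ξ := hcl _ hφ α (by simp [subf, subf_self])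
      have hPα := ih α (by omega) hα
      intro B hB L
      simp only [Supp, supp_atom]
      constructor
      · intro h
        have := h B (fun _ h => h) 0 (f (.bang α))
          (fun D hD hs => prom_bang (hB.trans hD) hα ((hPα D (hB.trans hD) 0).mp hs))
        simpa using this
      · intro h C hC K p hprem
        have hCN : SimBase Ξ f ⊆ C := hB.trans hC
        set D : Base := insert ((0 : Multiset Box), (0 : Box), f α) C with hD_def
        have hCD : C ⊆ D := Set.subset_insert _ _
        have hq : Deriv D 0 (f α) := deriv_app0 (Set.mem_insert _ _)
        have hsα : Supp D 0 α := (hPα D (hCN.trans hCD) 0).mpr hq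
        have hK : Deriv D K p := hprem D hCD hsα
        have htr : Deriv C (K + {f (.bang α)}) p := transfer hCN hα hK
        have h2 : Deriv C (K + {f (.bang α), f (.bang α)}) p := by
          refine deriv_cast (wk_d hCN hα htr) ?_
          simp [Multiset.insert_eq_cons, ← Multiset.singleton_add, add_assoc]
        exact ctr_L hCN hα (deriv_mono hC h) h2

end Main

theorem flattening_preserves_support (Γ0 : Multiset Fml) (φ0 : Fml)
    (f : Fml → Atom)
    (hatom : ∀ q : Atom, f (.atom q) = q)
    (hinj : ∀ φ ∈ subfSeq Γ0 φ0, ∀ ψ ∈ subfSeq Γ0 φ0, f φ = f ψ → φ = ψ)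
    (hfresh : ∀ φ ∈ subfSeq Γ0 φ0, (∀ q : Atom, φ ≠ .atom q) → Fml.atom (f φ) ∉ subfSeq Γ0 φ0)
    (B : Base) (hB : SimBase (subfSeq Γ0 φ0) f ⊆ B)
    (L : Multiset Atom) (φ : Fml) (hφ : φ ∈ subfSeq Γ0 φ0) :
    Supp B L φ ↔ Supp B L (.atom (f φ)) := by
  rw [supp_atom]
  exact pp_main (subfSeq Γ0 φ0) f hatom (subfSeq_closed Γ0 φ0) (deg φ) φ le_rfl hφ B hB L
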